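/- Every minimal prime of the binomial edge ideal $J_{C_4}$ of the 4-cycle has local v-number equal to $2$; in particular $\mathrm{v}(J_{C_4})=2$. -/

import Mathlib

open MvPolynomial

set_option synthInstance.maxHeartbeats 1000000

namespace Paper

noncomputable section

variable (K : Type) [Field K]

/-- The v-number of a graded ideal `I`: the least `d` such that there is a homogeneous
polynomial `f` of degree `d` with `(I : f)` an associated prime of `R/I`. -/
def vNumber {σ : Type} (I : Ideal (MvPolynomial σ K)) : ℕ :=
  sInf {d : ℕ | ∃ f : MvPolynomial σ K, f.IsHomogeneous d ∧
    IsAssociatedPrime (Submodule.colon I (Ideal.span {f})) (MvPolynomial σ K ⧸ I)}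

/-- The local v-number of `I` at a prime `P`. -/
def vLocal {σ : Type} (I P : Ideal (MvPolynomial σ K)) : ℕ :=
  sInf {d : ℕ | ∃ f : MvPolynomial σ K, f.IsHomogeneous d ∧
    Submodule.colon I (Ideal.span {f}) = P}

/-- The edge binomial `f_{ij} = x_i y_j - x_j y_i`. -/
def bedge {V : Type} (i j : V) : MvPolynomial (V ⊕ V) K :=
  X (Sum.inl i) * X (Sum.inr j) - X (Sum.inl j) * X (Sum.inr i)

/-- The binomial edge ideal of a graph `G`. -/
def beIdeal {V : Type} (G : SimpleGraph V) : Ideal (MvPolynomial (V ⊕ V) K) :=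
  Ideal.span {p | ∃ i j : V, G.Adj i j ∧ p = bedge K i j}

/-- The (monomial) edge ideal of a graph `G`. -/
def edgeIdealM {V : Type} (G : SimpleGraph V) : Ideal (MvPolynomial V K) :=
  Ideal.span {p | ∃ i j : V, G.Adj i j ∧ p = X i * X j}

/-- `i` and `j` are connected by a walk in `G` avoiding the set `S`. -/
def ReachAvoid {V : Type} (G : SimpleGraph V) (S : Set V) (i j : V) : Prop :=
  ∃ w : G.Walk i j, ∀ v ∈ w.support, v ∉ S

/-- The disjoint union of complete graphs on the connected components of `G ∖ S`. -/
def tildeG {V : Type} (G : SimpleGraph V) (S : Set V) : SimpleGraph V where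
  Adj i j := i ≠ j ∧ ReachAvoid G S i j
  symm := by
    constructor
    rintro i j ⟨hne, w, hw⟩
    exact ⟨hne.symm, w.reverse, by
      intro v hv
      exact hw v (by simpa [SimpleGraph.Walk.support_reverse] using hv)⟩
  loopless := ⟨fun i h => h.1 rfl⟩

/-- The minimal prime `P_S` of the binomial edge ideal corresponding to a cut set `S`. -/
def PSIdeal {V : Type} (G : SimpleGraph V) (S : Set V) : Ideal (MvPolynomial (V ⊕ V) K) :=
  Ideal.span ((fun i => (X (Sum.inl i) : MvPolynomial (V ⊕ V) K)) '' S ∪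
      (fun i => (X (Sum.inr i) : MvPolynomial (V ⊕ V) K)) '' S)
    ⊔ beIdeal K (tildeG G S)

/-- Number of connected components of the induced subgraph on the complement of `S`. -/
def numComp {V : Type} (G : SimpleGraph V) (S : Set V) : ℕ :=
  Nat.card ((G.induce Sᶜ).ConnectedComponent)

/-- `S` is a cut set of `G`. -/
def IsCutSet {V : Type} (G : SimpleGraph V) (S : Set V) : Prop :=
  ∀ s ∈ S, numComp G (S \ {s}) < numComp G S

/-- `v` is a cut vertex of `G`. -/
def IsCutVertex {V : Type} (G : SimpleGraph V) (v : V) : Prop :=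
  numComp G (∅ : Set V) < numComp G {v}

/-- `G` is a cone graph: some vertex is adjacent to all others. -/
def IsConeGraph {V : Type} (G : SimpleGraph V) : Prop :=
  ∃ v : V, ∀ u : V, u ≠ v → G.Adj v u

/-- `G` (with its labelling by `Fin n`) is a closed graph. -/
def IsClosedGraph {n : ℕ} (G : SimpleGraph (Fin n)) : Prop :=
  ∀ i j k : Fin n, i < j → j < k → G.Adj i k → G.Adj i j ∧ G.Adj j k

/-- `R/I` is Cohen-Macaulay: there is a regular sequence (inside the irrelevant
maximal ideal) on `R/I` whose length is the Krull dimension of `R/I`. -/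
def IsCMQuot {σ : Type} (I : Ideal (MvPolynomial σ K)) : Prop :=
  ∃ rs : List (MvPolynomial σ K),
    (∀ f ∈ rs, f ∈ Ideal.span (Set.range (X : σ → MvPolynomial σ K))) ∧
    RingTheory.Sequence.IsRegular (MvPolynomial σ K ⧸ I)
      (rs.map (Ideal.Quotient.mk I)) ∧
    ((rs.length : ℕ) : WithBot (WithTop ℕ)) = ringKrullDim (MvPolynomial σ K ⧸ I)

section Regularity

variable {σ : Type} [Fintype σ] [DecidableEq σ]

/-- An arbitrary linear order on a finite type. -/
def fintypeLO (σ : Type) [Fintype σ] [DecidableEq σ] : LinearOrder σ :=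
  LinearOrder.lift' (Fintype.equivFin σ) (Fintype.equivFin σ).injective

/-- Term of homological degree `i` of the Koszul complex of `R/I` with respect to all the
variables; its homology computes `Tor_i(R/I, K)`. -/
abbrev KC (I : Ideal (MvPolynomial σ K)) (i : ℕ) : Type :=
  {T : Finset σ // T.card = i} → MvPolynomial σ K ⧸ I

/-- The Koszul differential. -/
def koszD (I : Ideal (MvPolynomial σ K)) (i : ℕ) (f : KC K I (i + 1)) : KC K I i :=
  letI LO := fintypeLO σ
  letI : (p : Prop) → Decidable p := Classical.propDecidable
  fun T => ∑ t ∈ (Finset.univ \ T.1).attach,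
    ((-1 : MvPolynomial σ K ⧸ I) ^ ((T.1.filter (fun a => LO.lt a t.1)).card)) *
      (Ideal.Quotient.mk I (X t.1) *
        f ⟨insert t.1 T.1, by
          rw [Finset.card_insert_of_notMem (Finset.mem_sdiff.mp t.2).2, T.2]⟩)

/-- Being a cycle in the Koszul complex. -/
def isCycle (I : Ideal (MvPolynomial σ K)) : (i : ℕ) → KC K I i → Prop
  | 0, _ => True
  | (i + 1), f => koszD K I i f = 0

/-- Nonvanishing of the graded Betti number `β_{i,j}(R/I)`: the `i`-th Koszul homology has a
nonzero class of internal degree `j`. -/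
def bettiNe (I : Ideal (MvPolynomial σ K)) (i j : ℕ) : Prop :=
  ∃ f : KC K I i,
    (∀ T, ∃ p : MvPolynomial σ K, p.IsHomogeneous (j - i) ∧ Ideal.Quotient.mk I p = f T) ∧
    isCycle K I i f ∧ ¬ ∃ g : KC K I (i + 1), koszD K I i g = f

/-- The Castelnuovo-Mumford regularity of `R/I`, as `max { j - i : β_{i,j}(R/I) ≠ 0 }`. -/
def reg (I : Ideal (MvPolynomial σ K)) : ℕ :=
  sSup {r : ℕ | ∃ i j : ℕ, j = i + r ∧ bettiNe K I i j}

end Regularity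

end

end Paper

/-!
The binomial edge ideal `J` of `C₄` has three minimal primes: `(x₁, y₁, x₃, y₃)`, `(x₀, y₀, x₂, y₂)`
and the ideal `J_{K₄}` of `2`-minors of the generic `2 × 4` matrix, which is prime as the kernel
of the Segre-type map `x_i ↦ s t_i, y_i ↦ t_i`. They are the colon ideals `J : f₀₂`, `J : f₁₃`
and `J : x₁x₂` of quadrics. Conversely, if `J : f` is prime it contains one of the three primes.
If it contains a variable `z`, then `z f ∈ J_{K₄}` forces `f ∈ J_{K₄}`; if it contains `J_{K₄}`,
then `f₀₂ f, f₁₃ f ∈ J` force `f ∈ (x₁, y₁, x₃, y₃) ∩ (x₀, y₀, x₂, y₂)`. Either way every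
monomial of `f` has degree at least `2`, so a nonzero homogeneous `f` has degree at least `2`.
-/

namespace Paper

variable (K : Type) [Field K]

section Colon

variable {R : Type*} [CommRing R]

theorem colon_span_singleton_eq {I P : Ideal R} [P.IsPrime] {f : R} (hIP : I ≤ P) (hf : f ∉ P)
    (hPf : P ≤ I.colon (Ideal.span {f})) : I.colon (Ideal.span {f}) = P :=
  le_antisymm (fun g hg =>
    (‹P.IsPrime›.mem_or_mem (hIP (Ideal.mem_colon_span_singleton.mp hg))).resolve_right hf) hPf

theorem mem_of_le_colon_of_not_le {I P Q : Ideal R} [Q.IsPrime] {f : R} (hIQ : I ≤ Q)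
    (hP : P ≤ I.colon (Ideal.span {f})) (hPQ : ¬P ≤ Q) : f ∈ Q := by
  obtain ⟨g, hgP, hgQ⟩ := Set.not_subset.mp hPQ
  exact (‹Q.IsPrime›.mem_or_mem
    (hIQ (Ideal.mem_colon_span_singleton.mp (hP hgP)))).resolve_left hgQ

theorem isAssociatedPrime_colon_span_singleton {I : Ideal R} {f : R}
    (h : (I.colon (Ideal.span {f})).IsPrime) :
    IsAssociatedPrime (I.colon (Ideal.span {f})) (R ⧸ I) := by
  refine ⟨h, Submodule.Quotient.mk f, ?_⟩
  have : (⊥ : Submodule R (R ⧸ I)).colon {Submodule.Quotient.mk f}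
      = I.colon (Ideal.span {f}) := by
    ext r
    rw [Submodule.mem_colon_singleton, Submodule.mem_bot, ← Submodule.Quotient.mk_smul,
      Submodule.Quotient.mk_eq_zero, smul_eq_mul, Ideal.mem_colon_span_singleton]
  rw [this, h.radical]

end Colon

section VariableIdeal

variable {R : Type*} [CommRing R] {σ : Type*}

open Classical in
noncomputable def killVars (s : Set σ) : MvPolynomial σ R →ₐ[R] MvPolynomial σ R :=
  aeval fun i => if i ∈ s then 0 else X i

theorem killVars_X_of_mem {s : Set σ} {i : σ} (h : i ∈ s) :
    killVars s (X i : MvPolynomial σ R) = 0 := by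
  simp [killVars, h]

theorem killVars_X_of_notMem {s : Set σ} {i : σ} (h : i ∉ s) :
    killVars s (X i : MvPolynomial σ R) = X i := by
  simp [killVars, h]

theorem sub_killVars_mem_span (s : Set σ) (p : MvPolynomial σ R) :
    p - killVars s p ∈ Ideal.span (X '' s) := by
  induction p using MvPolynomial.induction_on with
  | C a => simp
  | add p q hp hq => simpa only [map_add, add_sub_add_comm] using add_mem hp hq
  | mul_X p i hp =>
    rw [show p * X i - killVars s (p * X i)
        = (p - killVars s p) * X i + killVars s p * (X i - killVars s (X i)) by
      rw [map_mul]; ring]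
    refine add_mem (Ideal.mul_mem_right _ _ hp) (Ideal.mul_mem_left _ _ ?_)
    by_cases h : i ∈ s
    · rw [killVars_X_of_mem h, sub_zero]
      exact Ideal.subset_span ⟨i, h, rfl⟩
    · rw [killVars_X_of_notMem h, sub_self]
      exact zero_mem _

theorem ker_killVars (s : Set σ) :
    RingHom.ker (killVars s : MvPolynomial σ R →ₐ[R] MvPolynomial σ R) = Ideal.span (X '' s) := by
  refine le_antisymm (fun p hp => ?_) (Ideal.span_le.mpr ?_)
  · simpa [RingHom.mem_ker.mp hp] using sub_killVars_mem_span s p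
  · rintro _ ⟨i, hi, rfl⟩
    exact killVars_X_of_mem hi

instance isPrime_span_X_image [IsDomain R] (s : Set σ) :
    (Ideal.span (X '' s) : Ideal (MvPolynomial σ R)).IsPrime :=
  ker_killVars (R := R) s ▸ RingHom.ker_isPrime _

theorem notMem_span_X_image_of_killVars_ne_zero {s : Set σ} {p : MvPolynomial σ R}
    (h : killVars s p ≠ 0) : p ∉ Ideal.span (X '' s) := by
  rwa [← ker_killVars, RingHom.mem_ker]

theorem two_le_degree_of_mem_span_X_image_inf {s t : Set σ} (hst : Disjoint s t)
    {p : MvPolynomial σ R} (hs : p ∈ Ideal.span (X '' s)) (ht : p ∈ Ideal.span (X '' t))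
    {m : σ →₀ ℕ} (hm : m ∈ p.support) : 2 ≤ m.degree := by
  classical
  obtain ⟨i, hi, hmi⟩ := mem_ideal_span_X_image.mp hs m hm
  obtain ⟨j, hj, hmj⟩ := mem_ideal_span_X_image.mp ht m hm
  have hij : i ≠ j := hst.ne_of_mem hi hj
  calc 2 ≤ m i + m j := by omega
    _ = ∑ k ∈ {i, j}, m k := (Finset.sum_pair hij).symm
    _ ≤ m.degree := Finset.sum_le_sum_of_subset (by simp [Finset.insert_subset_iff, hmi, hmj])

end VariableIdeal

section Degree

variable {R : Type*} [CommSemiring R] {σ : Type*}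

theorem le_degree_of_mem_span {S : Set (MvPolynomial σ R)} {n : ℕ}
    (hS : ∀ g ∈ S, g.IsHomogeneous n) {p : MvPolynomial σ R} (hp : p ∈ Ideal.span S) :
    ∀ m ∈ p.support, n ≤ m.degree := by
  classical
  induction hp using Submodule.span_induction with
  | mem g hg =>
    intro m hm
    by_contra h
    exact mem_support_iff.mp hm ((hS g hg).coeff_eq_zero (by omega))
  | zero => simp
  | add p q _ _ hp hq =>
    intro m hm
    rcases Finset.mem_union.mp (support_add hm) with h | h
    exacts [hp m h, hq m h]
  | smul r p _ hp =>
    intro m hm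
    obtain ⟨a, -, b, hb, rfl⟩ := Finset.mem_add.mp (support_mul r p hm)
    rw [map_add]
    exact (hp b hb).trans (Nat.le_add_left _ _)

theorem IsHomogeneous.eq_zero_of_forall_lt_degree {p : MvPolynomial σ R} {n : ℕ}
    (hp : p.IsHomogeneous n) (h : ∀ m ∈ p.support, n < m.degree) : p = 0 :=
  support_eq_empty.mp (Finset.eq_empty_of_forall_notMem fun m hm =>
    mem_support_iff.mp hm (hp.coeff_eq_zero (h m hm).ne'))

end Degree

section BinomialEdgeIdeal

variable {V : Type}

theorem bedge_self (i : V) : bedge K i i = 0 := sub_self _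

theorem bedge_swap (i j : V) : bedge K j i = -bedge K i j := by
  simp only [bedge]; ring

theorem bedge_isHomogeneous (i j : V) : (bedge K i j).IsHomogeneous 2 :=
  ((isHomogeneous_X _ _).mul (isHomogeneous_X _ _)).sub
    ((isHomogeneous_X _ _).mul (isHomogeneous_X _ _))

theorem bedge_ne_zero {i j : V} (hij : i ≠ j) : bedge K i j ≠ 0 := by
  classical
  intro h
  have := congrArg (eval fun s => if s = Sum.inl i ∨ s = Sum.inr j then (1 : K) else 0) h
  simp [bedge, hij, hij.symm] at this

theorem bedge_mem_beIdeal {G : SimpleGraph V} {i j : V} (h : G.Adj i j) :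
    bedge K i j ∈ beIdeal K G :=
  Ideal.subset_span ⟨i, j, h, rfl⟩

theorem bedge_mem_beIdeal_top (i j : V) : bedge K i j ∈ beIdeal K (⊤ : SimpleGraph V) := by
  rcases eq_or_ne i j with rfl | h
  · rw [bedge_self]; exact zero_mem _
  · exact bedge_mem_beIdeal K h

theorem beIdeal_mono {G H : SimpleGraph V} (h : G ≤ H) : beIdeal K G ≤ beIdeal K H :=
  Ideal.span_mono fun _ ⟨i, j, hij, hp⟩ => ⟨i, j, h hij, hp⟩

theorem two_le_degree_of_mem_beIdeal {G : SimpleGraph V} {p : MvPolynomial (V ⊕ V) K}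
    (hp : p ∈ beIdeal K G) : ∀ m ∈ p.support, 2 ≤ m.degree :=
  le_degree_of_mem_span (by rintro _ ⟨i, j, -, rfl⟩; exact bedge_isHomogeneous K i j) hp

/-- From `x_k f_{ij} = x_i f_{kj} + x_j f_{ik}` and its analogue for `y_k`. -/
theorem X_mul_bedge_mem_beIdeal {G : SimpleGraph V} {i j k : V} (hik : G.Adj i k)
    (hkj : G.Adj k j) {s : V ⊕ V} (hs : Sum.elim id id s = k) :
    X s * bedge K i j ∈ beIdeal K G := by
  have hkj' := bedge_mem_beIdeal K hkj
  have hik' := bedge_mem_beIdeal K hik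
  rcases s with k | k <;> obtain rfl : k = _ := hs
  · rw [show X (Sum.inl k) * bedge K i j
        = X (Sum.inl i) * bedge K k j + X (Sum.inl j) * bedge K i k by simp only [bedge]; ring]
    exact add_mem (Ideal.mul_mem_left _ _ hkj') (Ideal.mul_mem_left _ _ hik')
  · rw [show X (Sum.inr k) * bedge K i j
        = X (Sum.inr i) * bedge K k j + X (Sum.inr j) * bedge K i k by simp only [bedge]; ring]
    exact add_mem (Ideal.mul_mem_left _ _ hkj') (Ideal.mul_mem_left _ _ hik')

noncomputable def vertexIdeal (A : Set V) : Ideal (MvPolynomial (V ⊕ V) K) :=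
  Ideal.span (X '' (Sum.elim id id ⁻¹' A))

instance (A : Set V) : (vertexIdeal K A).IsPrime := isPrime_span_X_image _

theorem X_mem_vertexIdeal {A : Set V} {s : V ⊕ V} (hs : Sum.elim id id s ∈ A) :
    X s ∈ vertexIdeal K A :=
  Ideal.subset_span ⟨s, hs, rfl⟩

theorem beIdeal_le_vertexIdeal {G : SimpleGraph V} {A : Set V}
    (hA : ∀ i j, G.Adj i j → i ∈ A ∨ j ∈ A) : beIdeal K G ≤ vertexIdeal K A := by
  refine Ideal.span_le.mpr ?_
  rintro _ ⟨i, j, hij, rfl⟩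
  rcases hA i j hij with h | h
  · exact sub_mem (Ideal.mul_mem_right _ _ (X_mem_vertexIdeal K (s := Sum.inl i) h))
      (Ideal.mul_mem_left _ _ (X_mem_vertexIdeal K (s := Sum.inr i) h))
  · exact sub_mem (Ideal.mul_mem_left _ _ (X_mem_vertexIdeal K (s := Sum.inr j) h))
      (Ideal.mul_mem_right _ _ (X_mem_vertexIdeal K (s := Sum.inl j) h))

theorem bedge_notMem_vertexIdeal {A : Set V} {i j : V} (hij : i ≠ j) (hi : i ∉ A)
    (hj : j ∉ A) : bedge K i j ∉ vertexIdeal K A := by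
  refine notMem_span_X_image_of_killVars_ne_zero ?_
  have : killVars (Sum.elim id id ⁻¹' A) (bedge K i j) = bedge K i j := by
    simp [bedge, killVars_X_of_notMem, hi, hj]
  rw [this]
  exact bedge_ne_zero K hij

theorem colon_bedge_eq_vertexIdeal {G : SimpleGraph V} {A : Set V} {i j : V} (hij : i ≠ j)
    (hi : i ∉ A) (hj : j ∉ A) (hcover : ∀ k l, G.Adj k l → k ∈ A ∨ l ∈ A)
    (hnbr : ∀ k ∈ A, G.Adj i k ∧ G.Adj k j) :
    (beIdeal K G).colon (Ideal.span {bedge K i j}) = vertexIdeal K A := by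
  refine colon_span_singleton_eq (beIdeal_le_vertexIdeal K hcover)
    (bedge_notMem_vertexIdeal K hij hi hj) (Ideal.span_le.mpr ?_)
  rintro _ ⟨s, hs, rfl⟩
  exact Ideal.mem_colon_span_singleton.mpr
    (X_mul_bedge_mem_beIdeal K (hnbr _ hs).1 (hnbr _ hs).2 rfl)

end BinomialEdgeIdeal

section Segre

variable {V : Type}

noncomputable def segre : MvPolynomial (V ⊕ V) K →ₐ[K] MvPolynomial (Option V) K :=
  aeval (Sum.elim (fun i => X none * X (some i)) (fun i => X (some i)))

noncomputable def segreExponent (a b : V →₀ ℕ) : Option V →₀ ℕ :=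
  Finsupp.single none a.degree + Finsupp.mapDomain some (a + b)

theorem segre_monomial (a b : V →₀ ℕ) (c : K) :
    segre K (monomial (Finsupp.sumElim a b) c) = monomial (segreExponent a b) c := by
  classical
  rw [segre, segreExponent, aeval_monomial, Finsupp.prod_sumElim, monomial_eq,
    Finsupp.prod_add_index', Finsupp.prod_single_index, Finsupp.prod_mapDomain_index,
    Finsupp.prod_add_index']
  · simp only [Function.comp_def, Sum.elim_inl, Sum.elim_inr, mul_pow, Finsupp.prod_mul]
    rw [Finsupp.prod, Finset.prod_pow_eq_pow_sum, ← Finsupp.degree_apply, algebraMap_eq]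
    ring
  all_goals simp [pow_add]

theorem segreExponent_injective {a b a' b' : V →₀ ℕ}
    (h : segreExponent a b = segreExponent a' b') : a + b = a' + b' ∧ a.degree = a'.degree := by
  constructor
  · ext i
    simpa [segreExponent, Finsupp.mapDomain_apply (Option.some_injective V)]
      using DFunLike.congr_fun h (some i)
  · simpa [segreExponent, Finsupp.mapDomain_of_notMem_range] using DFunLike.congr_fun h none

theorem segre_bedge (i j : V) : segre K (bedge K i j) = 0 := by
  simp only [bedge, segre, map_sub, map_mul, aeval_X, Sum.elim_inl, Sum.elim_inr]
  ring

theorem X_inl_mul_monomial_sumElim (i : V) (a b : V →₀ ℕ) :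
    X (Sum.inl i) * monomial (Finsupp.sumElim a b) (1 : K)
      = monomial (Finsupp.sumElim (a + Finsupp.single i 1) b) 1 := by
  rw [X, monomial_mul, one_mul, add_comm, ← add_zero b, Finsupp.sumElim_add,
    Finsupp.sumElim_single_zero, add_zero]

theorem X_inr_mul_monomial_sumElim (i : V) (a b : V →₀ ℕ) :
    X (Sum.inr i) * monomial (Finsupp.sumElim a b) (1 : K)
      = monomial (Finsupp.sumElim a (b + Finsupp.single i 1)) 1 := by
  rw [X, monomial_mul, one_mul, add_comm, ← add_zero a, Finsupp.sumElim_add,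
    Finsupp.sumElim_zero_single, add_zero]

theorem monomial_sumElim_exchange_mem_beIdeal_top (a b : V →₀ ℕ) (i j : V) :
    monomial (Finsupp.sumElim (a + Finsupp.single i 1) (b + Finsupp.single j 1)) (1 : K)
      - monomial (Finsupp.sumElim (a + Finsupp.single j 1) (b + Finsupp.single i 1)) 1
      ∈ beIdeal K (⊤ : SimpleGraph V) := by
  rw [show monomial (Finsupp.sumElim (a + Finsupp.single i 1) (b + Finsupp.single j 1)) (1 : K)
      - monomial (Finsupp.sumElim (a + Finsupp.single j 1) (b + Finsupp.single i 1)) 1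
      = bedge K i j * monomial (Finsupp.sumElim a b) 1 by
    simp only [← X_inl_mul_monomial_sumElim, ← X_inr_mul_monomial_sumElim, bedge]; ring]
  exact Ideal.mul_mem_right _ _ (bedge_mem_beIdeal_top K i j)

theorem degree_sub_single_one_add_one {u : V →₀ ℕ} {i : V} (h : u i ≠ 0) :
    (u - Finsupp.single i 1).degree + 1 = u.degree := by
  conv_rhs => rw [← Finsupp.sub_add_single_one_cancel h, map_add, Finsupp.degree_single]

/-- Induction on the `x`-degree: peel off a variable `x_i` of `x^a y^b`. If `x_i` does not divide
`x^a' y^b'`, then `y_i` does (the column sums agree), and so does some `x_j`; the exchange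
`x_j y_i ↦ x_i y_j` modulo `f_{ij}` reduces to the case where `x_i` divides both. -/
theorem monomial_sumElim_sub_mem_beIdeal_top {a b a' b' : V →₀ ℕ} (hab : a + b = a' + b')
    (hdeg : a.degree = a'.degree) :
    monomial (Finsupp.sumElim a b) (1 : K) - monomial (Finsupp.sumElim a' b') 1
      ∈ beIdeal K (⊤ : SimpleGraph V) := by
  obtain ⟨d, hd⟩ : ∃ d, a.degree = d := ⟨_, rfl⟩
  induction d generalizing a b a' b' with
  | zero =>
    obtain rfl : a = 0 := (Finsupp.degree_eq_zero_iff a).mp hd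
    obtain rfl : a' = 0 := (Finsupp.degree_eq_zero_iff a').mp (hdeg ▸ hd)
    rw [zero_add, zero_add] at hab
    rw [hab, sub_self]
    exact zero_mem _
  | succ d ih =>
    have exists_ne_zero : ∀ u : V →₀ ℕ, u.degree = d + 1 → ∃ k, u k ≠ 0 := fun u hu =>
      Finsupp.ne_iff.mp (show u ≠ 0 by rintro rfl; simp at hu)
    obtain ⟨i, hi⟩ := exists_ne_zero a hd
    have peel : ∀ a'' b'' : V →₀ ℕ, a'' i ≠ 0 → a + b = a'' + b'' → a''.degree = d + 1 →
        monomial (Finsupp.sumElim a b) (1 : K) - monomial (Finsupp.sumElim a'' b'') 1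
          ∈ beIdeal K ⊤ := by
      intro a'' b'' hi'' hab'' hd''
      rw [← Finsupp.sub_add_single_one_cancel hi, ← Finsupp.sub_add_single_one_cancel hi'',
        ← X_inl_mul_monomial_sumElim, ← X_inl_mul_monomial_sumElim, ← mul_sub]
      have := degree_sub_single_one_add_one hi
      have := degree_sub_single_one_add_one hi''
      refine Ideal.mul_mem_left _ _ (ih ?_ (by omega) (by omega))
      refine add_right_cancel (b := Finsupp.single i 1) ?_
      rw [add_right_comm, Finsupp.sub_add_single_one_cancel hi, add_right_comm,
        Finsupp.sub_add_single_one_cancel hi'', hab'']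
    rcases ne_or_eq (a' i) 0 with hi' | hi'
    · exact peel a' b' hi' hab (hdeg ▸ hd)
    have hbi : b' i ≠ 0 := by
      have := congrArg (· i) hab
      simp only [Finsupp.coe_add, Pi.add_apply, hi'] at this
      omega
    obtain ⟨j, hj⟩ := exists_ne_zero a' (hdeg ▸ hd)
    obtain ⟨a₀, rfl⟩ : ∃ a₀, a' = a₀ + Finsupp.single j 1 :=
      ⟨_, (Finsupp.sub_add_single_one_cancel hj).symm⟩
    obtain ⟨b₀, rfl⟩ : ∃ b₀, b' = b₀ + Finsupp.single i 1 :=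
      ⟨_, (Finsupp.sub_add_single_one_cancel hbi).symm⟩
    rw [← sub_add_sub_cancel _
      (monomial (Finsupp.sumElim (a₀ + Finsupp.single i 1) (b₀ + Finsupp.single j 1)) 1)]
    refine add_mem (peel _ _ (by simp) (by rw [hab]; abel) ?_)
      (monomial_sumElim_exchange_mem_beIdeal_top K a₀ b₀ i j)
    rw [← hd, hdeg]
    simp

/-- The monomials in a fibre of `segre` are congruent modulo `J_{K_V}`, so the quotient map
factors as `Θ ∘ segre` for a linear map `Θ` defined on the monomial basis. -/
theorem ker_segre : RingHom.ker (segre K) = beIdeal K (⊤ : SimpleGraph V) := by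
  classical
  refine le_antisymm (fun p hp => ?_) (Ideal.span_le.mpr ?_)
  · let q := (Ideal.Quotient.mkₐ K (beIdeal K (⊤ : SimpleGraph V))).toLinearMap
    let Θ : MvPolynomial (Option V) K →ₗ[K] _ := (basisMonomials _ K).constr K fun μ =>
      if h : ∃ ab : (V →₀ ℕ) × (V →₀ ℕ), segreExponent ab.1 ab.2 = μ then
        q (monomial (Finsupp.sumElim h.choose.1 h.choose.2) 1)
      else 0
    have hΘ : Θ ∘ₗ (segre K).toLinearMap = q := by
      refine (basisMonomials _ K).ext fun m => ?_
      obtain ⟨a, b, rfl⟩ : ∃ a b, m = Finsupp.sumElim a b :=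
        ⟨_, _, (Finsupp.comapDomain_sumElim_comapDomain m).symm⟩
      have hex : ∃ ab : (V →₀ ℕ) × (V →₀ ℕ), segreExponent ab.1 ab.2 = segreExponent a b :=
        ⟨(a, b), rfl⟩
      obtain ⟨hab, hdeg⟩ := segreExponent_injective hex.choose_spec
      have hb : ∀ μ, (monomial μ (1 : K) : MvPolynomial (Option V) K) = basisMonomials _ K μ :=
        fun μ => by rw [coe_basisMonomials]
      rw [LinearMap.comp_apply, AlgHom.toLinearMap_apply, coe_basisMonomials, segre_monomial, hb,
        Module.Basis.constr_basis, dif_pos hex]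
      exact (Ideal.Quotient.mk_eq_mk_iff_sub_mem _ _).mpr
        (monomial_sumElim_sub_mem_beIdeal_top K hab hdeg)
    have : q p = 0 := by
      rw [← hΘ, LinearMap.comp_apply, AlgHom.toLinearMap_apply, RingHom.mem_ker.mp hp, map_zero]
    exact Ideal.Quotient.eq_zero_iff_mem.mp this
  · rintro _ ⟨i, j, -, rfl⟩
    exact segre_bedge K i j

instance : (beIdeal K (⊤ : SimpleGraph V)).IsPrime :=
  ker_segre K ▸ RingHom.ker_isPrime _

theorem X_notMem_beIdeal_top (s : V ⊕ V) : X s ∉ beIdeal K (⊤ : SimpleGraph V) := by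
  rw [← ker_segre, RingHom.mem_ker]
  rcases s with i | i <;> simp [segre, X_ne_zero]

end Segre

namespace CycleFour

local notation "C₄" => SimpleGraph.cycleGraph 4
local notation "R₄" => MvPolynomial (Fin 4 ⊕ Fin 4) K
local notation "J₄" => beIdeal K C₄

/- Vertices are `0, 1, 2, 3`, so the cut sets are `{1, 3}` and `{0, 2}`, with primes
`P_S = vertexIdeal K S`, and `P_∅ = J_{K₄}`. -/

theorem colon_bedge_zero_two :
    (J₄).colon (Ideal.span {bedge K (0 : Fin 4) 2}) = vertexIdeal K ({1, 3} : Set (Fin 4)) :=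
  colon_bedge_eq_vertexIdeal K (by decide) (by decide) (by decide) (by decide) (by decide)

theorem colon_bedge_one_three :
    (J₄).colon (Ideal.span {bedge K (1 : Fin 4) 3}) = vertexIdeal K ({0, 2} : Set (Fin 4)) :=
  colon_bedge_eq_vertexIdeal K (by decide) (by decide) (by decide) (by decide) (by decide)

theorem colon_X_one_mul_X_two :
    (J₄).colon (Ideal.span {(X (Sum.inl 1) * X (Sum.inl 2) : R₄)})
      = beIdeal K (⊤ : SimpleGraph (Fin 4)) := by
  refine colon_span_singleton_eq (beIdeal_mono K le_top)
    (Ideal.IsPrime.mul_notMem inferInstance (X_notMem_beIdeal_top K _)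
      (X_notMem_beIdeal_top K _)) (Ideal.span_le.mpr ?_)
  rintro _ ⟨i, j, hij, rfl⟩
  rw [SetLike.mem_coe, Ideal.mem_colon_span_singleton]
  have : (C₄).Adj i j ∨ ((C₄).Adj i 1 ∧ (C₄).Adj 1 j) ∨ ((C₄).Adj i 2 ∧ (C₄).Adj 2 j) := by
    revert i j; decide
  rcases this with h | ⟨h1, h2⟩ | ⟨h1, h2⟩
  · exact Ideal.mul_mem_right _ _ (bedge_mem_beIdeal K h)
  · rw [show bedge K i j * (X (Sum.inl 1) * X (Sum.inl 2))
        = X (Sum.inl 2) * (X (Sum.inl 1) * bedge K i j) by ring]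
    exact Ideal.mul_mem_left _ _ (X_mul_bedge_mem_beIdeal K h1 h2 (s := Sum.inl 1) rfl)
  · rw [show bedge K i j * (X (Sum.inl 1) * X (Sum.inl 2))
        = X (Sum.inl 1) * (X (Sum.inl 2) * bedge K i j) by ring]
    exact Ideal.mul_mem_left _ _ (X_mul_bedge_mem_beIdeal K h1 h2 (s := Sum.inl 2) rfl)

theorem vertexIdeal_le_or_vertexIdeal_le_or_beIdeal_top_le {Q : Ideal R₄} [Q.IsPrime]
    (hQ : J₄ ≤ Q) :
    vertexIdeal K ({1, 3} : Set (Fin 4)) ≤ Q ∨ vertexIdeal K ({0, 2} : Set (Fin 4)) ≤ Q ∨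
      beIdeal K (⊤ : SimpleGraph (Fin 4)) ≤ Q := by
  by_contra! h
  have h02 := mem_of_le_colon_of_not_le hQ (colon_bedge_zero_two K).ge h.1
  have h13 := mem_of_le_colon_of_not_le hQ (colon_bedge_one_three K).ge h.2.1
  refine h.2.2 (Ideal.span_le.mpr ?_)
  rintro _ ⟨i, j, hij, rfl⟩
  have : (C₄).Adj i j ∨ (i = 0 ∧ j = 2) ∨ (i = 2 ∧ j = 0) ∨ (i = 1 ∧ j = 3) ∨
      (i = 3 ∧ j = 1) := by
    revert i j; decide
  rcases this with h | ⟨rfl, rfl⟩ | ⟨rfl, rfl⟩ | ⟨rfl, rfl⟩ | ⟨rfl, rfl⟩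
  · exact hQ (bedge_mem_beIdeal K h)
  · exact h02
  · rw [SetLike.mem_coe, bedge_swap]; exact neg_mem h02
  · exact h13
  · rw [SetLike.mem_coe, bedge_swap]; exact neg_mem h13

theorem exists_colon_eq_of_mem_minimalPrimes {P : Ideal R₄} (hP : P ∈ (J₄).minimalPrimes) :
    ∃ f : R₄, f.IsHomogeneous 2 ∧ (J₄).colon (Ideal.span {f}) = P := by
  obtain ⟨⟨hPrime, hJP⟩, hmin⟩ := hP
  have eq_of_le : ∀ Q, Q.IsPrime → J₄ ≤ Q → Q ≤ P → P = Q :=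
    fun Q hQ hJQ hQP => le_antisymm (hmin ⟨hQ, hJQ⟩ hQP) hQP
  rcases vertexIdeal_le_or_vertexIdeal_le_or_beIdeal_top_le K hJP with h | h | h
  · refine ⟨_, bedge_isHomogeneous K 0 2, ?_⟩
    rw [colon_bedge_zero_two, eq_of_le _ inferInstance (beIdeal_le_vertexIdeal K (by decide)) h]
  · refine ⟨_, bedge_isHomogeneous K 1 3, ?_⟩
    rw [colon_bedge_one_three, eq_of_le _ inferInstance (beIdeal_le_vertexIdeal K (by decide)) h]
  · refine ⟨X (Sum.inl 1) * X (Sum.inl 2), (isHomogeneous_X _ _).mul (isHomogeneous_X _ _), ?_⟩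
    rw [colon_X_one_mul_X_two, eq_of_le _ inferInstance (beIdeal_mono K le_top) h]

theorem two_le_of_isPrime_colon {f : R₄} {d : ℕ} (hf : f.IsHomogeneous d)
    (hQ : ((J₄).colon (Ideal.span {f})).IsPrime) : 2 ≤ d := by
  by_contra! hd
  have hf0 : f ≠ 0 := by
    rintro rfl
    exact hQ.ne_top (by rw [Ideal.colon_span, Submodule.colon_singleton_zero])
  have hmul : ∀ g ∈ (J₄).colon (Ideal.span {f}), g * f ∈ J₄ :=
    fun g hg => Ideal.mem_colon_span_singleton.mp hg
  refine hf0 (IsHomogeneous.eq_zero_of_forall_lt_degree hf fun m hm => hd.trans_le ?_)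
  have of_X_mem : ∀ s, X s ∈ (J₄).colon (Ideal.span {f}) → 2 ≤ m.degree := fun s hs =>
    two_le_degree_of_mem_beIdeal K (((inferInstance : (beIdeal K ⊤).IsPrime).mem_or_mem
      (beIdeal_mono K le_top (hmul _ hs))).resolve_left (X_notMem_beIdeal_top K s)) m hm
  rcases vertexIdeal_le_or_vertexIdeal_le_or_beIdeal_top_le K
    (Q := (J₄).colon (Ideal.span {f})) Ideal.le_colon with h | h | h
  · exact of_X_mem (Sum.inl 1) (h (X_mem_vertexIdeal K (by simp)))
  · exact of_X_mem (Sum.inl 0) (h (X_mem_vertexIdeal K (by simp)))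
  · have h13 : f ∈ vertexIdeal K ({1, 3} : Set (Fin 4)) := by
      rw [← colon_bedge_zero_two, Ideal.mem_colon_span_singleton, mul_comm]
      exact hmul _ (h (bedge_mem_beIdeal_top K 0 2))
    have h02 : f ∈ vertexIdeal K ({0, 2} : Set (Fin 4)) := by
      rw [← colon_bedge_one_three, Ideal.mem_colon_span_singleton, mul_comm]
      exact hmul _ (h (bedge_mem_beIdeal_top K 1 3))
    have hdisj : Disjoint ({1, 3} : Set (Fin 4)) {0, 2} := Set.disjoint_left.mpr (by decide)
    exact two_le_degree_of_mem_span_X_image_inf (hdisj.preimage _) h13 h02 hm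

end CycleFour

theorem statement_14 :
    (∀ P ∈ (beIdeal K (SimpleGraph.cycleGraph 4)).minimalPrimes,
      vLocal K (beIdeal K (SimpleGraph.cycleGraph 4)) P = 2) ∧
    vNumber K (beIdeal K (SimpleGraph.cycleGraph 4)) = 2 := by
  refine ⟨fun P hP => ?_, ?_⟩
  · obtain ⟨f, hf, hfP⟩ := CycleFour.exists_colon_eq_of_mem_minimalPrimes K hP
    exact IsLeast.csInf_eq ⟨⟨f, hf, hfP⟩,
      fun d ⟨g, hg, hgP⟩ => CycleFour.two_le_of_isPrime_colon K hg (hgP ▸ hP.1.1)⟩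
  · have hprime := CycleFour.colon_bedge_zero_two K ▸
      (inferInstance : (vertexIdeal K ({1, 3} : Set (Fin 4))).IsPrime)
    exact IsLeast.csInf_eq
      ⟨⟨_, bedge_isHomogeneous K 0 2, isAssociatedPrime_colon_span_singleton hprime⟩,
        fun d ⟨g, hg, hA⟩ => CycleFour.two_le_of_isPrime_colon K hg hA.isPrime⟩

end Paper
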